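/- arXiv:1808.09206 — 2 statements merged into one kernel-verified Lean document; each statement's English description precedes it below -/
import Mathlib

section
/- Counterexample bouquet: let X be the simplicial complex obtained as the wedge, at a common vertex v, of a triangulated 2-sphere S with two triangulated circles T₁, T₂. Then χ(X) = 0, yet X admits no complete matching of its simplices into incident pairs; specifically, the set A of even-dimensional simplices of S other than v satisfies |I(A)| = |A| − 1, violating Hall's condition. -/
/-- A finite abstract simplicial complex, given as a downward-closed family of nonempty
finite vertex sets. -/
def IsComplex {V : Type*} [DecidableEq V] (K : Finset (Finset V)) : Prop :=
  ∀ s ∈ K, s.Nonempty ∧ ∀ t ⊆ s, t.Nonempty → t ∈ K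

/-- Euler characteristic: a simplex on `k+1` vertices has dimension `k` and contributes
`(-1)^k = (-1)^(k+2)`. -/
def echar {V : Type*} [DecidableEq V] (K : Finset (Finset V)) : ℤ :=
  ∑ s ∈ K, (-1 : ℤ) ^ (s.card + 1)

/-- A complete matching on the pair `(K, Y)`: a fixed-point-free involution on the
simplices of `K` not in `Y` pairing each simplex with an incident one (one is a
codimension-one face of the other). -/
def Matchable {V : Type*} [DecidableEq V] (K Y : Finset (Finset V)) : Prop :=
  ∃ m : Finset V → Finset V, ∀ s ∈ K \ Y,
    m s ∈ K \ Y ∧ m (m s) = s ∧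
      ((s ⊆ m s ∧ (m s).card = s.card + 1) ∨ (m s ⊆ s ∧ s.card = (m s).card + 1))

theorem echar_union {V : Type*} [DecidableEq V] (P Q : Finset (Finset V)) :
    echar (P ∪ Q) = echar P + echar Q - echar (P ∩ Q) := by
  have := Finset.sum_union_inter (s₁ := P) (s₂ := Q) (f := fun s => (-1:ℤ)^(s.card+1))
  unfold echar
  linarith

/-- The wedge `X` at a common vertex `v` of a triangulated 2-sphere `S` (χ = 2,
dimension ≤ 2) with two triangulated circles `T₁`, `T₂` (χ = 0, dimension ≤ 1) has
`χ(X) = 0` but admits no complete matching: the set `A` of even-dimensional simplices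
of `S` other than `{v}` has incident set exactly the edges of `S`, of cardinality
`|A| - 1`, violating Hall's condition. -/
theorem stmt_11 {V : Type*} [DecidableEq V] (v : V)
    (S T1 T2 X : Finset (Finset V))
    (hX : X = S ∪ T1 ∪ T2)
    (hS : IsComplex S) (hT1 : IsComplex T1) (hT2 : IsComplex T2)
    (hST1 : S ∩ T1 = {{v}}) (hST2 : S ∩ T2 = {{v}}) (hT12 : T1 ∩ T2 = {{v}})
    (hSdim : ∀ s ∈ S, s.card ≤ 3)
    (hT1dim : ∀ s ∈ T1, s.card ≤ 2) (hT2dim : ∀ s ∈ T2, s.card ≤ 2)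
    (hdisj : ∀ s ∈ T1 ∪ T2, ∀ w ∈ s, w ≠ v → ({w} : Finset V) ∉ S)
    (hχS : echar S = 2) (hχT1 : echar T1 = 0) (hχT2 : echar T2 = 0) :
    echar X = 0 ∧ ¬ Matchable X ∅ := by
  subst hX
  have hvS : ({v} : Finset V) ∈ S := by
    have : ({v} : Finset V) ∈ S ∩ T1 := by rw [hST1]; simp
    exact (Finset.mem_inter.1 this).1
  constructor
  · have h1 : (S ∪ T1) ∩ T2 = ({{v}} : Finset (Finset V)) := by
      rw [Finset.union_inter_distrib_right, hST2, hT12]; simp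
    have hv1 : echar ({({v} : Finset V)} : Finset (Finset V)) = 1 := by
      simp [echar]
    rw [echar_union, echar_union, h1, hST1, hχS, hχT1, hχT2, hv1]
    norm_num
  · rintro ⟨m, hm⟩
    have hXne : ∀ s ∈ S ∪ T1 ∪ T2, s.Nonempty := by
      intro s hs
      rcases Finset.mem_union.1 hs with h | h
      · rcases Finset.mem_union.1 h with h | h
        · exact (hS s h).1
        · exact (hT1 s h).1
      · exact (hT2 s h).1
    have hXdim : ∀ s ∈ S ∪ T1 ∪ T2, s.card ≤ 3 := by
      intro s hs
      rcases Finset.mem_union.1 hs with h | h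
      · rcases Finset.mem_union.1 h with h | h
        · exact hSdim s h
        · exact le_trans (hT1dim s h) (by norm_num)
      · exact le_trans (hT2dim s h) (by norm_num)
    set A : Finset (Finset V) := (S.filter (fun s => ¬ s.card = 2)).erase {v} with hA
    set E : Finset (Finset V) := S.filter (fun s => s.card = 2) with hE
    -- every a ∈ A is matched to an edge of S
    have hmap : ∀ a ∈ A, m a ∈ E := by
      intro a ha
      have haf := Finset.mem_of_mem_erase ha
      have hanv : a ≠ {v} := Finset.ne_of_mem_erase ha
      have haS : a ∈ S := (Finset.mem_filter.1 haf).1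
      have hac2 : a.card ≠ 2 := (Finset.mem_filter.1 haf).2
      have haX : a ∈ (S ∪ T1 ∪ T2) \ ∅ := by
        simp [Finset.mem_union, haS]
      obtain ⟨hmaX, hmm, hrel⟩ := hm a haX
      have hmaU : m a ∈ S ∪ T1 ∪ T2 := (Finset.mem_sdiff.1 hmaX).1
      have hane : a.Nonempty := (hS a haS).1
      have ha1 : 1 ≤ a.card := Finset.card_pos.2 hane
      have ha3 : a.card ≤ 3 := hSdim a haS
      have hacases : a.card = 1 ∨ a.card = 3 := by omega
      rcases hacases with hc1 | hc3
      · -- a is a vertex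
        rcases hrel with ⟨hsub, hcard⟩ | ⟨hsub, hcard⟩
        · -- m a is an edge containing a
          have hma2 : (m a).card = 2 := by omega
          obtain ⟨u, hu⟩ := Finset.card_eq_one.1 hc1
          have huv : u ≠ v := by
            intro h; apply hanv; rw [hu, h]
          have huma : u ∈ m a := hsub (by simp [hu])
          have hmaS : m a ∈ S := by
            rcases Finset.mem_union.1 hmaU with h | h
            · rcases Finset.mem_union.1 h with h | h
              · exact h
              · exact absurd (hu ▸ haS) (hdisj (m a) (Finset.mem_union.2 (Or.inl h)) u huma huv)
            · exact absurd (hu ▸ haS) (hdisj (m a) (Finset.mem_union.2 (Or.inr h)) u huma huv)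
          exact Finset.mem_filter.2 ⟨hmaS, hma2⟩
        · -- m a would be empty
          have : (m a).Nonempty := hXne _ hmaU
          have : 1 ≤ (m a).card := Finset.card_pos.2 this
          omega
      · -- a is a triangle
        rcases hrel with ⟨hsub, hcard⟩ | ⟨hsub, hcard⟩
        · have : (m a).card ≤ 3 := hXdim _ hmaU
          omega
        · have hma2 : (m a).card = 2 := by omega
          have hmane : (m a).Nonempty := Finset.card_pos.1 (by omega)
          have hmaS : m a ∈ S := (hS a haS).2 (m a) hsub hmane
          exact Finset.mem_filter.2 ⟨hmaS, hma2⟩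
    have hinj : Set.InjOn m ↑A := by
      intro a ha b hb hab
      have haS : a ∈ S := (Finset.mem_filter.1 (Finset.mem_of_mem_erase ha)).1
      have hbS : b ∈ S := (Finset.mem_filter.1 (Finset.mem_of_mem_erase hb)).1
      have h1 := (hm a (by simp [Finset.mem_union, haS])).2.1
      have h2 := (hm b (by simp [Finset.mem_union, hbS])).2.1
      rw [← h1, hab, h2]
    have hcard : A.card ≤ E.card := Finset.card_le_card_of_injOn m hmap hinj
    -- counting
    have hsplit : (S.filter (fun s => ¬ s.card = 2)).card + E.card = S.card := by
      rw [hE, add_comm]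
      exact Finset.card_filter_add_card_filter_not (p := fun s : Finset V => s.card = 2)
    have hsum : echar S = -(E.card : ℤ) + ((S.filter (fun s => ¬ s.card = 2)).card : ℤ) := by
      unfold echar
      have h1 : ∀ s ∈ S, (-1 : ℤ) ^ (s.card + 1) =
          (if s.card = 2 then (-1 : ℤ) else 1) := by
        intro s hsmem
        have h1 : 1 ≤ s.card := Finset.card_pos.2 (hS s hsmem).1
        have h3 : s.card ≤ 3 := hSdim s hsmem
        interval_cases h : s.card <;> norm_num
      rw [Finset.sum_congr rfl h1,
        ← Finset.sum_filter_add_sum_filter_not S (fun s => s.card = 2)]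
      have e1 : (∑ s ∈ S.filter (fun s => s.card = 2), if s.card = 2 then (-1 : ℤ) else 1)
          = -(E.card : ℤ) := by
        have : (∑ s ∈ S.filter (fun s => s.card = 2), if s.card = 2 then (-1 : ℤ) else 1)
            = ∑ _s ∈ S.filter (fun s => s.card = 2), (-1 : ℤ) :=
          Finset.sum_congr rfl (fun s hs => by simp [(Finset.mem_filter.1 hs).2])
        rw [this, Finset.sum_const, hE]
        simp
      have e2 : (∑ s ∈ S.filter (fun s => ¬ s.card = 2), if s.card = 2 then (-1 : ℤ) else 1)
          = ((S.filter (fun s => ¬ s.card = 2)).card : ℤ) := by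
        have : (∑ s ∈ S.filter (fun s => ¬ s.card = 2), if s.card = 2 then (-1 : ℤ) else 1)
            = ∑ _s ∈ S.filter (fun s => ¬ s.card = 2), (1 : ℤ) :=
          Finset.sum_congr rfl (fun s hs => by simp [(Finset.mem_filter.1 hs).2])
        rw [this, Finset.sum_const]
        simp
      rw [e1, e2]
    have hvf : ({v} : Finset V) ∈ S.filter (fun s => ¬ s.card = 2) := by
      simp [hvS]
    have hAc : A.card = (S.filter (fun s => ¬ s.card = 2)).card - 1 :=
      Finset.card_erase_of_mem hvf
    have hfpos : 1 ≤ (S.filter (fun s => ¬ s.card = 2)).card := Finset.card_pos.2 ⟨_, hvf⟩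
    rw [hχS] at hsum
    omega
end

section
/- Suppose (Y, Z) is a pair of finite simplicial complexes with H_*(Y, Z; ℚ) = 0 (all relative rational homology groups vanish). Then the pair (Y, Z) admits a complete matching: a partition of the simplices of Y not in Z into pairs, each consisting of a simplex and one of its hyperfaces. -/
/-- Boundary coefficient of the hyperface `s` in `∂t` (vertices ordered by `<`):
if `s ⊆ t` with `|t| = |s| + 1` and `t \ s = {x}`, this is `(-1)^k` where `k` is the
number of vertices of `t` below `x`; otherwise `0`. -/
def bcoeff {V : Type*} [DecidableEq V] [LinearOrder V] (t s : Finset V) : ℚ :=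
  if s ⊆ t ∧ t.card = s.card + 1 then
    ∑ x ∈ t \ s, (-1 : ℚ) ^ (t.filter (fun y => y < x)).card
  else 0

/-- The boundary operator of the relative rational simplicial chain complex with cells
`Σ` (the simplices of the pair): chains are functions supported on `Σ`. -/
def bd {V : Type*} [DecidableEq V] [LinearOrder V] (Sig : Finset (Finset V))
    (c : Finset V → ℚ) : Finset V → ℚ :=
  fun s => if s ∈ Sig then ∑ t ∈ Sig, bcoeff t s * c t else 0

set_option synthInstance.maxHeartbeats 1000000
set_option maxHeartbeats 1000000
namespace AP

variable {V : Type*} [DecidableEq V] [LinearOrder V]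

lemma bcoeff_cond {t s : Finset V} (h : bcoeff t s ≠ 0) : s ⊆ t ∧ t.card = s.card + 1 := by
  rw [bcoeff] at h
  split_ifs at h with hc
  · exact hc
  · exact absurd rfl h

lemma sdiff_singleton {s t : Finset V} (h : s ⊆ t) (hc : t.card = s.card + 1) :
    ∃ x, x ∈ t ∧ x ∉ s ∧ t \ s = {x} := by
  have h1 : (t \ s).card = 1 := by
    rw [Finset.card_sdiff_of_subset h]; omega
  obtain ⟨x, hx⟩ := Finset.card_eq_one.mp h1
  have hxm : x ∈ t \ s := by rw [hx]; exact Finset.mem_singleton_self x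
  rw [Finset.mem_sdiff] at hxm
  exact ⟨x, hxm.1, hxm.2, hx⟩

lemma bcoeff_eq {s t : Finset V} {x : V} (h : s ⊆ t) (hc : t.card = s.card + 1)
    (hx : t \ s = {x}) : bcoeff t s = (-1 : ℚ) ^ (t.filter (fun y => y < x)).card := by
  rw [bcoeff, if_pos ⟨h, hc⟩, hx, Finset.sum_singleton]

lemma bcoeff_ne_zero {s t : Finset V} (h : s ⊆ t) (hc : t.card = s.card + 1) :
    bcoeff t s ≠ 0 := by
  obtain ⟨x, -, -, hx⟩ := sdiff_singleton h hc
  rw [bcoeff_eq h hc hx]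
  exact pow_ne_zero _ (by norm_num)

/-- Coordinate selection: for a subspace `W ⊆ ℚ^ι` there is a set `B` of coordinates,
of size `finrank W`, whose vanishing forces an element of `W` to vanish. -/
lemma coordSelect {ι : Type*} [Fintype ι] [DecidableEq ι] (W : Submodule ℚ (ι → ℚ)) :
    ∃ B : Finset ι, B.card = Module.finrank ℚ W ∧
      (∀ v ∈ W, (∀ i ∈ B, v i = 0) → v = 0) ∧ (∀ i ∈ B, ∃ v ∈ W, v i ≠ 0) := by
  suffices H : ∀ n (W : Submodule ℚ (ι → ℚ)), Module.finrank ℚ W = n →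
      ∃ B : Finset ι, B.card = Module.finrank ℚ W ∧
      (∀ v ∈ W, (∀ i ∈ B, v i = 0) → v = 0) ∧ (∀ i ∈ B, ∃ v ∈ W, v i ≠ 0) from H _ W rfl
  intro n
  induction n using Nat.strong_induction_on with
  | _ n IH =>
    intro W hn
    rcases eq_or_ne W ⊥ with hbot | hbot
    · refine ⟨∅, ?_, ?_, ?_⟩
      · rw [hbot]; simp [finrank_bot]
      · intro v hv _; simpa [hbot] using hv
      · simp
    · obtain ⟨w, hwW, hw0⟩ := Submodule.exists_mem_ne_zero_of_ne_bot hbot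
      obtain ⟨i₀, hi₀⟩ : ∃ i, w i ≠ 0 := by
        by_contra hc
        push_neg at hc
        exact hw0 (funext hc)
      set f : W →ₗ[ℚ] ℚ := (LinearMap.proj i₀).comp W.subtype with hf
      have hfsurj : Function.Surjective f := by
        intro q
        refine ⟨(q / w i₀) • ⟨w, hwW⟩, ?_⟩
        simp [hf, div_mul_cancel₀, hi₀]
      have hrange : LinearMap.range f = ⊤ := LinearMap.range_eq_top.mpr hfsurj
      have hrk : Module.finrank ℚ (LinearMap.range f) + Module.finrank ℚ (LinearMap.ker f)
          = Module.finrank ℚ W := LinearMap.finrank_range_add_finrank_ker f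
      have hr1 : Module.finrank ℚ (LinearMap.range f) = 1 := by
        rw [hrange, finrank_top, Module.finrank_self]
      set W' : Submodule ℚ (ι → ℚ) := W ⊓ LinearMap.ker (LinearMap.proj i₀ :
        (ι → ℚ) →ₗ[ℚ] ℚ) with hW'
      have hker : LinearMap.ker f = W'.comap W.subtype := by
        ext x
        simp [hf, hW', x.2]
      have hle : W' ≤ W := inf_le_left
      have heq : Module.finrank ℚ W' = Module.finrank ℚ (LinearMap.ker f) := by
        rw [hker]
        exact ((Submodule.comapSubtypeEquivOfLe hle).finrank_eq).symm
      have hnpos : 0 < n := by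
        rcases Nat.eq_zero_or_pos n with h0 | h
        · exact absurd (Submodule.finrank_eq_zero.mp (hn.trans h0)) hbot
        · exact h
      have hW'rk : Module.finrank ℚ W' = n - 1 := by omega
      obtain ⟨B', hB'card, hB'sel, hB'wit⟩ := IH (n-1) (by omega) W' hW'rk
      have hi₀B' : i₀ ∉ B' := by
        intro hmem
        obtain ⟨v, hvW', hvi⟩ := hB'wit i₀ hmem
        exact hvi (by simpa [hW'] using hvW'.2)
      refine ⟨insert i₀ B', ?_, ?_, ?_⟩
      · rw [Finset.card_insert_of_notMem hi₀B', hB'card, hW'rk, hn]; omega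
      · intro v hv hz
        have hvi₀ : v i₀ = 0 := hz i₀ (Finset.mem_insert_self _ _)
        have hvW' : v ∈ W' := ⟨hv, by simpa using hvi₀⟩
        exact hB'sel v hvW' fun i hi => hz i (Finset.mem_insert_of_mem hi)
      · intro i hi
        rcases Finset.mem_insert.mp hi with h | h
        · exact ⟨w, hwW, h ▸ hi₀⟩
        · obtain ⟨v, hvW', hvi⟩ := hB'wit i h
          exact ⟨v, hle hvW', hvi⟩

lemma dd_zero {S : Finset (Finset V)}
    (hS : ∀ ⦃r s t : Finset V⦄, r ∈ S → t ∈ S → r ⊆ s → s ⊆ t → s ∈ S)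
    {r t : Finset V} (hr : r ∈ S) (ht : t ∈ S) :
    ∑ s ∈ S, bcoeff s r * bcoeff t s = 0 := by
  by_cases hcond : r ⊆ t ∧ t.card = r.card + 2
  · obtain ⟨hsub, hc⟩ := hcond
    have h2 : (t \ r).card = 2 := by rw [Finset.card_sdiff_of_subset hsub]; omega
    obtain ⟨x, y, hxy0, hxyeq⟩ := Finset.card_eq_two.mp h2
    -- wlog x < y
    wlog hxy : x < y generalizing x y
    · exact this y x hxy0.symm (by rw [hxyeq]; exact Finset.pair_comm x y)
        (lt_of_le_of_ne (not_lt.mp hxy) hxy0.symm)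
    have hmemdiff : ∀ z, z ∈ t \ r ↔ z = x ∨ z = y := by
      intro z; rw [hxyeq]; simp
    have hx : x ∈ t ∧ x ∉ r := by
      have := (hmemdiff x).mpr (Or.inl rfl); rw [Finset.mem_sdiff] at this; exact this
    have hy : y ∈ t ∧ y ∉ r := by
      have := (hmemdiff y).mpr (Or.inr rfl); rw [Finset.mem_sdiff] at this; exact this
    set s1 := insert x r with hs1
    set s2 := insert y r with hs2
    have hs1c : s1.card = r.card + 1 := Finset.card_insert_of_notMem hx.2
    have hs2c : s2.card = r.card + 1 := Finset.card_insert_of_notMem hy.2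
    have hrs1 : r ⊆ s1 := Finset.subset_insert _ _
    have hrs2 : r ⊆ s2 := Finset.subset_insert _ _
    have hs1t : s1 ⊆ t := Finset.insert_subset hx.1 hsub
    have hs2t : s2 ⊆ t := Finset.insert_subset hy.1 hsub
    have hs1S : s1 ∈ S := hS hr ht hrs1 hs1t
    have hs2S : s2 ∈ S := hS hr ht hrs2 hs2t
    have hne : s1 ≠ s2 := by
      intro h
      have : y ∈ s1 := h ▸ Finset.mem_insert_self y r
      rcases Finset.mem_insert.mp this with h' | h'
      · exact hxy.ne' h'
      · exact hy.2 h'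
    have hpairsub : {s1, s2} ⊆ S := by
      intro z hz; rcases Finset.mem_insert.mp hz with h | h
      · exact h ▸ hs1S
      · exact (Finset.mem_singleton.mp h) ▸ hs2S
    have hsum : ∑ s ∈ S, bcoeff s r * bcoeff t s
        = ∑ s ∈ ({s1, s2} : Finset (Finset V)), bcoeff s r * bcoeff t s := by
      refine (Finset.sum_subset hpairsub ?_).symm
      intro s hsS hsnot
      by_contra hne0
      have h1 : bcoeff s r ≠ 0 := fun h => hne0 (by rw [h, zero_mul])
      have h2' : bcoeff t s ≠ 0 := fun h => hne0 (by rw [h, mul_zero])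
      obtain ⟨hrs, hcs⟩ := bcoeff_cond h1
      obtain ⟨hst, -⟩ := bcoeff_cond h2'
      obtain ⟨z, hzt, hznr, hzeq⟩ := sdiff_singleton hrs hcs
      have hseq : s = insert z r := by
        have : s = r ∪ (s \ r) := by rw [Finset.union_sdiff_of_subset hrs]
        rw [this, hzeq, Finset.union_comm]; rfl
      have hzdiff : z ∈ t \ r := Finset.mem_sdiff.mpr ⟨hst hzt, hznr⟩
      rcases (hmemdiff z).mp hzdiff with h | h
      · exact hsnot (by rw [hseq, h]; exact Finset.mem_insert_self _ _)
      · exact hsnot (by rw [hseq, h]; exact Finset.mem_insert.mpr (Or.inr (Finset.mem_singleton_self _)))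
    rw [hsum, Finset.sum_pair hne]
    -- the four sdiff computations
    have hd1 : s1 \ r = {x} := by
      ext z
      simp only [Finset.mem_sdiff, hs1, Finset.mem_insert, Finset.mem_singleton]
      constructor
      · rintro ⟨h | h, hnr⟩
        · exact h
        · exact absurd h hnr
      · rintro rfl; exact ⟨Or.inl rfl, hx.2⟩
    have hd2 : t \ s1 = {y} := by
      ext z
      simp only [Finset.mem_sdiff, hs1, Finset.mem_insert, Finset.mem_singleton]
      constructor
      · rintro ⟨hzt, hns⟩
        push_neg at hns
        rcases (hmemdiff z).mp (Finset.mem_sdiff.mpr ⟨hzt, hns.2⟩) with h | h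
        · exact absurd h hns.1
        · exact h
      · rintro rfl
        exact ⟨hy.1, by push_neg; exact ⟨hxy.ne', hy.2⟩⟩
    have hd3 : s2 \ r = {y} := by
      ext z
      simp only [Finset.mem_sdiff, hs2, Finset.mem_insert, Finset.mem_singleton]
      constructor
      · rintro ⟨h | h, hnr⟩
        · exact h
        · exact absurd h hnr
      · rintro rfl; exact ⟨Or.inl rfl, hy.2⟩
    have hd4 : t \ s2 = {x} := by
      ext z
      simp only [Finset.mem_sdiff, hs2, Finset.mem_insert, Finset.mem_singleton]
      constructor
      · rintro ⟨hzt, hns⟩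
        push_neg at hns
        rcases (hmemdiff z).mp (Finset.mem_sdiff.mpr ⟨hzt, hns.2⟩) with h | h
        · exact h
        · exact absurd h hns.1
      · rintro rfl
        exact ⟨hx.1, by push_neg; exact ⟨hxy.ne, hx.2⟩⟩
    have htc1 : t.card = s1.card + 1 := by omega
    have htc2 : t.card = s2.card + 1 := by omega
    rw [bcoeff_eq hrs1 hs1c hd1, bcoeff_eq hs1t htc1 hd2,
        bcoeff_eq hrs2 hs2c hd3, bcoeff_eq hs2t htc2 hd4]
    -- filter computations
    have hf1 : s1.filter (fun z => z < x) = r.filter (fun z => z < x) := by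
      rw [hs1, Finset.filter_insert, if_neg (lt_irrefl x)]
    have hf3 : s2.filter (fun z => z < y) = r.filter (fun z => z < y) := by
      rw [hs2, Finset.filter_insert, if_neg (lt_irrefl y)]
    have hf2 : t.filter (fun z => z < y) = insert x (r.filter (fun z => z < y)) := by
      ext z
      simp only [Finset.mem_filter, Finset.mem_insert]
      constructor
      · rintro ⟨hzt, hzy⟩
        by_cases hzr : z ∈ r
        · exact Or.inr ⟨hzr, hzy⟩
        · rcases (hmemdiff z).mp (Finset.mem_sdiff.mpr ⟨hzt, hzr⟩) with h | h
          · exact Or.inl h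
          · exact absurd (h ▸ hzy) (lt_irrefl y)
      · rintro (rfl | ⟨hzr, hzy⟩)
        · exact ⟨hx.1, hxy⟩
        · exact ⟨hsub hzr, hzy⟩
    have hf4 : t.filter (fun z => z < x) = r.filter (fun z => z < x) := by
      ext z
      simp only [Finset.mem_filter]
      constructor
      · rintro ⟨hzt, hzx⟩
        by_cases hzr : z ∈ r
        · exact ⟨hzr, hzx⟩
        · rcases (hmemdiff z).mp (Finset.mem_sdiff.mpr ⟨hzt, hzr⟩) with h | h
          · exact absurd (h ▸ hzx) (lt_irrefl x)
          · exact absurd (h ▸ hzx) (not_lt.mpr hxy.le)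
      · rintro ⟨hzr, hzx⟩
        exact ⟨hsub hzr, hzx⟩
    have hxnotin : x ∉ r.filter (fun z => z < y) := fun h => hx.2 (Finset.mem_filter.mp h).1
    rw [hf1, hf2, hf3, hf4, Finset.card_insert_of_notMem hxnotin, pow_succ]
    ring
  · apply Finset.sum_eq_zero
    intro s hs
    by_contra hne0
    have h1 : bcoeff s r ≠ 0 := fun h => hne0 (by rw [h, zero_mul])
    have h2' : bcoeff t s ≠ 0 := fun h => hne0 (by rw [h, mul_zero])
    obtain ⟨hrs, hcs⟩ := bcoeff_cond h1
    obtain ⟨hst, hct⟩ := bcoeff_cond h2'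
    exact hcond ⟨hrs.trans hst, by omega⟩

/-- The simplices of `S` of cardinality `m`. -/
def lvl (S : Finset (Finset V)) (m : ℕ) : Finset (Finset V) :=
  S.filter (fun s => s.card = m)

lemma mem_lvl {S : Finset (Finset V)} {m : ℕ} {s : Finset V} :
    s ∈ lvl S m ↔ s ∈ S ∧ s.card = m := Finset.mem_filter

/-- The boundary matrix from level `m+1` to level `m`. -/
def Dmat (S : Finset (Finset V)) (m : ℕ) : Matrix ↥(lvl S m) ↥(lvl S (m+1)) ℚ :=
  Matrix.of fun b a => bcoeff a.1 b.1

theorem main (S : Finset (Finset V)) (hne : ∀ s ∈ S, s.Nonempty)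
    (hint : ∀ ⦃r s t : Finset V⦄, r ∈ S → t ∈ S → r ⊆ s → s ⊆ t → s ∈ S)
    (hexact : ∀ (m : ℕ) (v : ↥(lvl S (m+1)) → ℚ), (Dmat S m).mulVec v = 0 →
      ∃ u : ↥(lvl S (m+2)) → ℚ, (Dmat S (m+1)).mulVec u = v) :
    ∃ μ : Finset V → Finset V, ∀ s ∈ S, μ s ∈ S ∧ μ (μ s) = s ∧
      ((s ⊆ μ s ∧ (μ s).card = s.card + 1) ∨ (μ s ⊆ s ∧ s.card = (μ s).card + 1)) := by
  classical
  -- d ∘ d = 0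
  have hd2 : ∀ m, Dmat S m * Dmat S (m+1) = 0 := by
    intro m
    ext b t
    rw [Matrix.mul_apply, Matrix.zero_apply]
    have hbS : b.1 ∈ S := (mem_lvl.mp b.2).1
    have hbc : b.1.card = m := (mem_lvl.mp b.2).2
    have htS : t.1 ∈ S := (mem_lvl.mp t.2).1
    calc ∑ s : ↥(lvl S (m+1)), Dmat S m b s * Dmat S (m+1) s t
        = ∑ s ∈ lvl S (m+1), bcoeff s b.1 * bcoeff t.1 s :=
          Finset.sum_coe_sort (lvl S (m+1)) (fun s => bcoeff s b.1 * bcoeff t.1 s)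
      _ = ∑ s ∈ S, bcoeff s b.1 * bcoeff t.1 s := by
          apply Finset.sum_subset (Finset.filter_subset _ _)
          intro s hsS hsnot
          by_contra hne0
          have h1 : bcoeff s b.1 ≠ 0 := fun h => hne0 (by rw [h, zero_mul])
          obtain ⟨-, hcs⟩ := bcoeff_cond h1
          exact hsnot (mem_lvl.mpr ⟨hsS, by omega⟩)
      _ = 0 := dd_zero hint hbS htS
  set W : (m : ℕ) → Submodule ℚ (↥(lvl S m) → ℚ) := fun m => LinearMap.range (Dmat S m).mulVecLin with hW
  choose B hBcard hBsel hBwit using fun m => coordSelect (W m)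
  set A : (m : ℕ) → Finset ↥(lvl S m) := fun m => Finset.univ \ B m with hAdef
  have hA : ∀ m (i : ↥(lvl S m)), i ∈ A m ↔ i ∉ B m := by
    intro m i; simp [hAdef]
  -- L1 : injectivity on chains supported away from B
  have hinj : ∀ m (v : ↥(lvl S (m+1)) → ℚ), (∀ i ∈ B (m+1), v i = 0) →
      (Dmat S m).mulVec v = 0 → v = 0 := by
    intro m v hsupp hdv
    obtain ⟨u, hu⟩ := hexact m v hdv
    exact hBsel (m+1) v ⟨u, by simpa [Matrix.mulVecLin_apply] using hu⟩ hsupp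
  -- L2 : surjectivity onto B-coordinates from W
  have hsurj : ∀ m (w : ↥(B m) → ℚ), ∃ u ∈ W m, ∀ j : ↥(B m), u j.1 = w j := by
    intro m w
    set res : (↥(lvl S m) → ℚ) →ₗ[ℚ] (↥(B m) → ℚ) :=
      LinearMap.funLeft ℚ ℚ (Subtype.val : ↥(B m) → ↥(lvl S m)) with hres
    set φ : W m →ₗ[ℚ] (↥(B m) → ℚ) := res.comp (W m).subtype with hφ
    have hφinj : Function.Injective φ := by
      intro u1 u2 h12
      apply Subtype.ext
      have hd : u1.1 - u2.1 ∈ W m := sub_mem u1.2 u2.2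
      have : u1.1 - u2.1 = 0 := by
        apply hBsel m _ hd
        intro i hi
        have := congrFun h12 ⟨i, hi⟩
        simp only [hφ, hres, LinearMap.comp_apply, LinearMap.funLeft_apply,
          Submodule.subtype_apply] at this
        simp [this]
      exact sub_eq_zero.mp this
    have hrk : Module.finrank ℚ (W m) = Module.finrank ℚ (↥(B m) → ℚ) := by
      rw [Module.finrank_fintype_fun_eq_card, Fintype.card_coe, ← hBcard m]
    have hφsurj : Function.Surjective φ :=
      (LinearMap.injective_iff_surjective_of_finrank_eq_finrank hrk).mp hφinj
    obtain ⟨u, hu⟩ := hφsurj w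
    refine ⟨u.1, u.2, fun j => ?_⟩
    have := congrFun hu j
    simpa [hφ, hres, LinearMap.funLeft_apply] using this
  -- L3 : rank of W m equals the size of A (m+1)
  have hrkA : ∀ m, Module.finrank ℚ (W m) = (A (m+1)).card := by
    intro m
    set res : (↥(lvl S (m+1)) → ℚ) →ₗ[ℚ] (↥(B (m+1)) → ℚ) :=
      LinearMap.funLeft ℚ ℚ (Subtype.val : ↥(B (m+1)) → ↥(lvl S (m+1))) with hres
    set U : Submodule ℚ (↥(lvl S (m+1)) → ℚ) := LinearMap.ker res with hU
    have hUmem : ∀ v, v ∈ U ↔ ∀ i ∈ B (m+1), v i = 0 := by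
      intro v
      constructor
      · intro h i hi
        exact congrFun h ⟨i, hi⟩
      · intro h
        funext j
        exact h j.1 j.2
    set ψ : U →ₗ[ℚ] (↥(lvl S m) → ℚ) := (Dmat S m).mulVecLin.comp U.subtype with hψ
    have hψinj : Function.Injective ψ := by
      intro u1 u2 h12
      apply Subtype.ext
      have hd : u1.1 - u2.1 ∈ U := sub_mem u1.2 u2.2
      have hz : (Dmat S m).mulVec (u1.1 - u2.1) = 0 := by
        have : (Dmat S m).mulVecLin (u1.1 - u2.1) = 0 := by
          rw [map_sub]
          have e1 : (Dmat S m).mulVecLin u1.1 = (Dmat S m).mulVecLin u2.1 := h12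
          rw [e1, sub_self]
        simpa [Matrix.mulVecLin_apply] using this
      exact sub_eq_zero.mp (hinj m _ (fun i hi => (hUmem _).mp hd i hi) hz)
    have hψrange : LinearMap.range ψ = W m := by
      apply le_antisymm
      · rintro _ ⟨v, rfl⟩
        exact ⟨v.1, rfl⟩
      · rintro _ ⟨v, rfl⟩
        obtain ⟨u, huW, hucoord⟩ := hsurj (m+1) (fun j => v j.1)
        have hvuU : v - u ∈ U := by
          rw [hUmem]
          intro i hi
          have := hucoord ⟨i, hi⟩
          simp only [Pi.sub_apply]
          rw [this]
          ring
        refine ⟨⟨v - u, hvuU⟩, ?_⟩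
        obtain ⟨z, hz⟩ := huW
        have hDu : (Dmat S m).mulVecLin u = 0 := by
          rw [← hz]
          show (Dmat S m).mulVecLin ((Dmat S (m+1)).mulVecLin z) = 0
          simp only [Matrix.mulVecLin_apply]
          rw [Matrix.mulVec_mulVec, hd2 m, Matrix.zero_mulVec]
        show (Dmat S m).mulVecLin (v - u) = (Dmat S m).mulVecLin v
        rw [map_sub, hDu, sub_zero]
    have h1 : Module.finrank ℚ (W m) = Module.finrank ℚ U := by
      rw [← hψrange]
      exact (LinearMap.finrank_range_of_inj hψinj)
    have hressurj : Function.Surjective res := by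
      intro w
      refine ⟨fun i => if h : i ∈ B (m+1) then w ⟨i, h⟩ else 0, ?_⟩
      funext j
      simp [hres, LinearMap.funLeft_apply, j.2]
    have h2 : Module.finrank ℚ (LinearMap.range res) + Module.finrank ℚ U
        = Module.finrank ℚ (↥(lvl S (m+1)) → ℚ) := LinearMap.finrank_range_add_finrank_ker res
    have h3 : LinearMap.range res = ⊤ := LinearMap.range_eq_top.mpr hressurj
    have h4 : Module.finrank ℚ (↥(B (m+1)) → ℚ) = (B (m+1)).card := by
      rw [Module.finrank_fintype_fun_eq_card, Fintype.card_coe]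
    have h5 : Module.finrank ℚ (↥(lvl S (m+1)) → ℚ) = (lvl S (m+1)).card := by
      rw [Module.finrank_fintype_fun_eq_card, Fintype.card_coe]
    rw [h3, finrank_top, h4, h5] at h2
    have h6 : (A (m+1)).card = (lvl S (m+1)).card - (B (m+1)).card := by
      rw [hAdef]
      simp only [Finset.card_univ_diff, Finset.card_univ, Fintype.card_coe]
    have h7 : (B (m+1)).card ≤ (lvl S (m+1)).card := by
      have := Finset.card_le_card (Finset.subset_univ (B (m+1)))
      simpa [Finset.card_univ, Fintype.card_coe] using this
    omega
  -- L4 : the matchings level by level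
  have hmatch : ∀ m, ∃ g : ↥(A m) ≃ ↥(B (m-1)),
      ∀ a : ↥(A m), bcoeff (a.1.1) ((g a).1.1) ≠ 0 := by
    intro m
    match m with
    | 0 =>
      have hempty : IsEmpty ↥(lvl S 0) := by
        constructor
        intro i
        have h0 : i.1.card = 0 := (mem_lvl.mp i.2).2
        have := hne i.1 (mem_lvl.mp i.2).1
        rw [Finset.card_eq_zero.mp h0] at this
        exact Finset.not_nonempty_empty this
      haveI : IsEmpty ↥(A 0) := ⟨fun a => hempty.false a.1⟩
      haveI : IsEmpty ↥(B 0) := ⟨fun b => hempty.false b.1⟩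
      exact ⟨Equiv.equivOfIsEmpty _ _, fun a => (IsEmpty.false a).elim⟩
    | k+1 =>
      set M : Matrix ↥(B k) ↥(A (k+1)) ℚ := Matrix.of fun b a => bcoeff a.1.1 b.1.1 with hM
      have hMinj : ∀ v, M.mulVec v = 0 → v = 0 := by
        intro v hv
        set v' : ↥(lvl S (k+1)) → ℚ := fun i => if h : i ∈ A (k+1) then v ⟨i, h⟩ else 0 with hv'
        have hsupp : ∀ i ∈ B (k+1), v' i = 0 := by
          intro i hi
          have : i ∉ A (k+1) := fun hAmem => ((hA (k+1) i).mp hAmem) hi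
          simp [hv', this]
        have hvav : ∀ a : ↥(A (k+1)), v a = v' a.1 := by
          intro a
          simp [hv', a.2]
        have hcoordB : ∀ j : ↥(lvl S k), j ∈ B k → ((Dmat S k).mulVec v') j = 0 := by
          intro j hj
          have hstep : ((Dmat S k).mulVec v') j
              = ∑ i ∈ A (k+1), bcoeff i.1 j.1 * v' i := by
            show ∑ i : ↥(lvl S (k+1)), Dmat S k j i * v' i
                = ∑ i ∈ A (k+1), bcoeff i.1 j.1 * v' i
            refine Eq.symm ?_
            calc ∑ i ∈ A (k+1), bcoeff i.1 j.1 * v' i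
                = ∑ i ∈ Finset.univ, bcoeff i.1 j.1 * v' i := by
                  apply Finset.sum_subset (Finset.subset_univ _)
                  intro i _ hni
                  have : v' i = 0 := by simp [hv', hni]
                  rw [this, mul_zero]
              _ = ∑ i : ↥(lvl S (k+1)), Dmat S k j i * v' i := rfl
          rw [hstep]
          have hMv := congrFun hv ⟨j, hj⟩
          calc ∑ i ∈ A (k+1), bcoeff i.1 j.1 * v' i
              = ∑ a : ↥(A (k+1)), bcoeff a.1.1 j.1 * v' a.1 :=
                (Finset.sum_coe_sort (A (k+1)) (fun i => bcoeff i.1 j.1 * v' i)).symm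
            _ = ∑ a : ↥(A (k+1)), M ⟨j, hj⟩ a * v a := by
                apply Finset.sum_congr rfl
                intro a _
                rw [hvav a]
                rfl
            _ = 0 := hMv
        have hWmem : (Dmat S k).mulVec v' ∈ W k := ⟨v', Matrix.mulVecLin_apply ..⟩
        have hDv0 : (Dmat S k).mulVec v' = 0 := hBsel k _ hWmem hcoordB
        have hv'0 : v' = 0 := hinj k v' hsupp hDv0
        funext a
        rw [hvav a, hv'0]
        rfl
      have hcards : Fintype.card ↥(A (k+1)) = Fintype.card ↥(B k) := by
        rw [Fintype.card_coe, Fintype.card_coe, ← hrkA k, hBcard k]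
      let e : ↥(A (k+1)) ≃ ↥(B k) := Fintype.equivOfCardEq hcards
      set N : Matrix ↥(A (k+1)) ↥(A (k+1)) ℚ := Matrix.of fun a a' => M (e a) a' with hN
      have hNdet : N.det ≠ 0 := by
        intro hdet
        obtain ⟨v, hv0, hvN⟩ := Matrix.exists_mulVec_eq_zero_iff.mpr hdet
        apply hv0
        apply hMinj
        funext b
        have hb := congrFun hvN (e.symm b)
        calc M.mulVec v b = N.mulVec v (e.symm b) := by
              show ∑ a, M b a * v a = ∑ a, N (e.symm b) a * v a
              apply Finset.sum_congr rfl
              intro a _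
              rw [hN]
              show M b a * v a = M (e (e.symm b)) a * v a
              rw [e.apply_symm_apply]
          _ = 0 := hb
      have hperm : ∃ σ : Equiv.Perm ↥(A (k+1)), ∀ a, N (σ a) a ≠ 0 := by
        by_contra hcon
        push_neg at hcon
        apply hNdet
        rw [Matrix.det_apply]
        apply Finset.sum_eq_zero
        intro σ _
        obtain ⟨a, ha⟩ := hcon σ
        rw [Finset.prod_eq_zero (f := fun i => N (σ i) i) (Finset.mem_univ a) ha, smul_zero]
      obtain ⟨σ, hσ⟩ := hperm
      exact ⟨σ.trans e, fun a => hσ a⟩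
  choose g hg using hmatch
  -- the matching function
  refine ⟨fun s =>
    if h : ∃ a : ↥(A s.card), a.1.1 = s then (g s.card h.choose).1.1
    else if h' : ∃ b : ↥(B s.card), b.1.1 = s then ((g (s.card + 1)).symm h'.choose).1.1
    else s, ?_⟩
  set μ : Finset V → Finset V := fun s =>
    if h : ∃ a : ↥(A s.card), a.1.1 = s then (g s.card h.choose).1.1
    else if h' : ∃ b : ↥(B s.card), b.1.1 = s then ((g (s.card + 1)).symm h'.choose).1.1
    else s with hμ
  have hμA : ∀ (n : ℕ) (u : Finset V), u.card = n → ∀ (a : ↥(A n)), a.1.1 = u →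
      μ u = (g n a).1.1 := by
    intro n u hcard a ha
    subst hcard
    have hex : ∃ a' : ↥(A u.card), a'.1.1 = u := ⟨a, ha⟩
    rw [hμ]
    simp only [dif_pos hex]
    have : hex.choose = a := by
      apply Subtype.ext
      apply Subtype.ext
      rw [hex.choose_spec, ha]
    rw [this]
  have hμB : ∀ (n : ℕ) (u : Finset V), u.card = n → ∀ (b : ↥(B n)), b.1.1 = u →
      μ u = ((g (n + 1)).symm b).1.1 := by
    intro n u hcard b hb
    subst hcard
    have hnoA : ¬ ∃ a : ↥(A u.card), a.1.1 = u := by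
      rintro ⟨a, ha⟩
      have h1 : a.1 = b.1 := by
        apply Subtype.ext
        rw [ha, hb]
      have h2 : a.1 ∈ A u.card := a.2
      rw [hA] at h2
      exact h2 (h1 ▸ b.2)
    have hex : ∃ b' : ↥(B u.card), b'.1.1 = u := ⟨b, hb⟩
    rw [hμ]
    simp only [dif_neg hnoA, dif_pos hex]
    have : hex.choose = b := by
      apply Subtype.ext
      apply Subtype.ext
      rw [hex.choose_spec, hb]
    rw [this]
  intro s hs
  obtain ⟨k, hk⟩ : ∃ k, s.card = k + 1 := by
    have := hne s hs
    have := Finset.card_pos.mpr this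
    exact ⟨s.card - 1, by omega⟩
  have hslvl : s ∈ lvl S (k+1) := mem_lvl.mpr ⟨hs, hk⟩
  set i : ↥(lvl S (k+1)) := ⟨s, hslvl⟩ with hi
  by_cases hiA : i ∈ A (k+1)
  · -- matched downward
    set a : ↥(A (k+1)) := ⟨i, hiA⟩ with ha
    have h1 : μ s = (g (k+1) a).1.1 := hμA (k+1) s hk a rfl
    set b₁ : ↥(B k) := g (k+1) a with hb₁
    set t : Finset V := b₁.1.1 with hT
    have htlvl : t ∈ lvl S k := b₁.1.2
    have htS : t ∈ S := (mem_lvl.mp htlvl).1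
    have htc : t.card = k := (mem_lvl.mp htlvl).2
    have hbc : bcoeff s t ≠ 0 := hg (k+1) a
    obtain ⟨hsub, hcard⟩ := bcoeff_cond hbc
    have h2 : μ t = ((g (k+1)).symm b₁).1.1 := hμB k t htc b₁ rfl
    have h1' : μ s = t := h1
    rw [h1', h2]
    refine ⟨htS, ?_, Or.inr ⟨hsub, hcard⟩⟩
    rw [hb₁, Equiv.symm_apply_apply]
  · -- matched upward
    have hiB : i ∈ B (k+1) := by
      by_contra hniB
      exact hiA ((hA (k+1) i).mpr hniB)
    set b : ↥(B (k+1)) := ⟨i, hiB⟩ with hb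
    have h1 : μ s = ((g (k+2)).symm b).1.1 := hμB (k+1) s hk b rfl
    set a₁ : ↥(A (k+2)) := (g (k+2)).symm b with ha₁
    set t : Finset V := a₁.1.1 with hT
    have htlvl : t ∈ lvl S (k+2) := a₁.1.2
    have htS : t ∈ S := (mem_lvl.mp htlvl).1
    have htc : t.card = k+2 := (mem_lvl.mp htlvl).2
    have hbc : bcoeff t ((g (k+2)) a₁).1.1 ≠ 0 := hg (k+2) a₁
    rw [ha₁, Equiv.apply_symm_apply] at hbc
    obtain ⟨hsub, hcard⟩ := bcoeff_cond hbc
    have h2 : μ t = (g (k+2) a₁).1.1 := hμA (k+2) t htc a₁ rfl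
    have h1' : μ s = t := h1
    rw [h1', h2, ha₁, Equiv.apply_symm_apply]
    exact ⟨htS, rfl, Or.inl ⟨hsub, by rw [hk] at hcard ⊢; omega⟩⟩

end AP

/-- Acyclic Pair Lemma: if the pair `(Y,Z)` of finite simplicial complexes has vanishing
relative rational homology — every relative cycle of the relative chain complex is a
relative boundary — then `(Y,Z)` admits a complete matching. -/
theorem stmt_15 {V : Type*} [DecidableEq V] [LinearOrder V]
    (Y Z : Finset (Finset V)) (hY : IsComplex Y) (hZ : IsComplex Z) (hZY : Z ⊆ Y)
    (hacyclic : ∀ c : Finset V → ℚ, (∀ s, c s ≠ 0 → s ∈ Y \ Z) →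
      bd (Y \ Z) c = 0 →
      ∃ b : Finset V → ℚ, (∀ s, b s ≠ 0 → s ∈ Y \ Z) ∧ bd (Y \ Z) b = c) :
    Matchable Y Z := by
  classical
  set S : Finset (Finset V) := Y \ Z with hS
  have hmemS : ∀ {s : Finset V}, s ∈ S ↔ s ∈ Y ∧ s ∉ Z := fun {s} => Finset.mem_sdiff
  have hne : ∀ s ∈ S, s.Nonempty := fun s hs => (hY s (hmemS.mp hs).1).1
  have hint : ∀ ⦃r s t : Finset V⦄, r ∈ S → t ∈ S → r ⊆ s → s ⊆ t → s ∈ S := by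
    intro r s t hr ht hrs hst
    have hrne : r.Nonempty := hne r hr
    have hsne : s.Nonempty := hrne.mono hrs
    have hsY : s ∈ Y := (hY t (hmemS.mp ht).1).2 s hst hsne
    have hsnZ : s ∉ Z := fun hsZ => (hmemS.mp hr).2 ((hZ s hsZ).2 r hrs hrne)
    exact hmemS.mpr ⟨hsY, hsnZ⟩
  have hexact : ∀ (m : ℕ) (v : ↥(AP.lvl S (m+1)) → ℚ), (AP.Dmat S m).mulVec v = 0 →
      ∃ u : ↥(AP.lvl S (m+2)) → ℚ, (AP.Dmat S (m+1)).mulVec u = v := by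
    intro m v hdv
    set c : Finset V → ℚ := fun s => if h : s ∈ AP.lvl S (m+1) then v ⟨s, h⟩ else 0 with hc
    have hcsupp : ∀ s, c s ≠ 0 → s ∈ Y \ Z := by
      intro s hcs
      rw [hc] at hcs
      by_cases h : s ∈ AP.lvl S (m+1)
      · exact (AP.mem_lvl.mp h).1
      · simp [h] at hcs
    have hccyc : bd S c = 0 := by
      funext s
      rw [bd]
      by_cases hsS : s ∈ S
      · rw [if_pos hsS]
        by_cases hcard : s.card = m
        · have hslvl : s ∈ AP.lvl S m := AP.mem_lvl.mpr ⟨hsS, hcard⟩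
          have hstep : ∑ t ∈ S, bcoeff t s * c t
              = ∑ t ∈ AP.lvl S (m+1), bcoeff t s * c t := by
            refine (Finset.sum_subset (Finset.filter_subset _ _) ?_).symm
            intro t htS htn
            have htn' : t ∉ AP.lvl S (m+1) := htn
            have : c t = 0 := by
              rw [hc]
              simp [htn']
            rw [this, mul_zero]
          rw [hstep]
          have h2 : ∑ t ∈ AP.lvl S (m+1), bcoeff t s * c t
              = ∑ t : ↥(AP.lvl S (m+1)), bcoeff t.1 s * c t.1 :=
            (Finset.sum_coe_sort (AP.lvl S (m+1)) (fun t => bcoeff t s * c t)).symm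
          rw [h2]
          have h3 : ∑ t : ↥(AP.lvl S (m+1)), bcoeff t.1 s * c t.1
              = ((AP.Dmat S m).mulVec v) ⟨s, hslvl⟩ := by
            apply Finset.sum_congr rfl
            intro t _
            rw [hc]
            simp only [dif_pos t.2]
            rfl
          rw [h3, hdv]
          rfl
        · apply Finset.sum_eq_zero
          intro t htS
          by_cases hbz : bcoeff t s = 0
          · rw [hbz, zero_mul]
          · have hct : c t = 0 := by
              rw [hc]
              by_cases h : t ∈ AP.lvl S (m+1)
              · exfalso
                obtain ⟨-, hc1⟩ := AP.bcoeff_cond hbz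
                have := (AP.mem_lvl.mp h).2
                omega
              · simp [h]
            rw [hct, mul_zero]
      · rw [if_neg hsS]
        rfl
    obtain ⟨b, hbsupp, hbd⟩ := hacyclic c hcsupp hccyc
    refine ⟨fun t => b t.1, ?_⟩
    funext j
    have hjS : j.1 ∈ S := (AP.mem_lvl.mp j.2).1
    have hjc : j.1.card = m + 1 := (AP.mem_lvl.mp j.2).2
    have h1 : ((AP.Dmat S (m+1)).mulVec (fun t => b t.1)) j
        = ∑ t : ↥(AP.lvl S (m+2)), bcoeff t.1 j.1 * b t.1 := rfl
    have h2 : ∑ t : ↥(AP.lvl S (m+2)), bcoeff t.1 j.1 * b t.1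
        = ∑ t ∈ AP.lvl S (m+2), bcoeff t j.1 * b t :=
      Finset.sum_coe_sort (AP.lvl S (m+2)) (fun t => bcoeff t j.1 * b t)
    have h3 : ∑ t ∈ AP.lvl S (m+2), bcoeff t j.1 * b t = ∑ t ∈ S, bcoeff t j.1 * b t := by
      apply Finset.sum_subset (Finset.filter_subset _ _)
      intro t htS htn
      by_cases hbz : bcoeff t j.1 = 0
      · rw [hbz, zero_mul]
      · exfalso
        obtain ⟨-, hc1⟩ := AP.bcoeff_cond hbz
        exact htn (AP.mem_lvl.mpr ⟨htS, by omega⟩)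
    have h4 : ∑ t ∈ S, bcoeff t j.1 * b t = c j.1 := by
      have := congrFun hbd j.1
      rw [bd, if_pos hjS] at this
      exact this
    have h5 : c j.1 = v j := by
      rw [hc]
      simp only [dif_pos j.2]
    rw [h1, h2, h3, h4, h5]
  obtain ⟨μ, hμ⟩ := AP.main S hne hint hexact
  exact ⟨μ, fun s hs => hμ s hs⟩
end
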